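/- Let 𝒯 be a triangulated category and α₁, …, α_c elements of the graded center of 𝒯 each induced by an action of a monoidal triangulated category on 𝒯. Then for all objects X, Y in 𝒯, level_𝒯^{X//α}(Y//α) ≤ level_𝒯^X(Y), where Z//α denotes the Koszul object of the sequence α₁,…,α_c on Z. -/

import Mathlib

open CategoryTheory Category Limits Pretriangulated MonoidalCategory

universe v₁ v₂ v₃ u₁ u₂ u₃

section Defs

variable {C : Type u₁} [Category.{v₁} C] [Preadditive C] [HasZeroObject C] [HasShift C ℤ]
  [∀ n : ℤ, (shiftFunctor C n).Additive] [Pretriangulated C] [HasBinaryBiproducts C]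

/-- The square with sides `f : T ⟶ U`, `g : T ⟶ V`, `g' : U ⟶ X`, `f' : V ⟶ X`
is homotopy cartesian. -/
def HomotopyCartesian {T U V X : C} (f : T ⟶ U) (g : T ⟶ V) (g' : U ⟶ X) (f' : V ⟶ X) : Prop :=
  ∃ δ : X ⟶ T⟦(1 : ℤ)⟧,
    Triangle.mk (biprod.lift f (-g)) (biprod.desc g' f') δ ∈ distTriang C

/-- The smallest class of objects containing `X` that is closed under (de)suspensions,
finite coproducts and retracts. -/
inductive Thick1 (X : C) : C → Prop
  | base : Thick1 X X
  | zero (Z : C) : Limits.IsZero Z → Thick1 X Z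
  | shift (n : ℤ) (Y : C) : Thick1 X Y → Thick1 X (Y⟦n⟧)
  | sum (Y Z : C) : Thick1 X Y → Thick1 X Z → Thick1 X (Y ⊞ Z)
  | retract (Y Z : C) (i : Z ⟶ Y) (r : Y ⟶ Z) : i ≫ r = 𝟙 Z → Thick1 X Y → Thick1 X Z

/-- `ThickN X n Y` means `Y ∈ thick^n_𝒯(X)`. -/
def ThickN (X : C) : ℕ → C → Prop
  | 0, Y => Limits.IsZero Y
  | 1, Y => Thick1 X Y
  | (n + 2), Y => ∃ (Y' Ytil Y'' : C) (a : Y' ⟶ Y ⊞ Ytil) (b : Y ⊞ Ytil ⟶ Y'')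
      (c : Y'' ⟶ Y'⟦(1 : ℤ)⟧), (Triangle.mk a b c ∈ distTriang C) ∧
      Thick1 X Y' ∧ ThickN X (n + 1) Y''

/-- The `X`-level of `Y`: the least `n` such that `Y ∈ thick^n(X)` (and `⊤` if there
is no such `n`). -/
noncomputable def level (X Y : C) : ℕ∞ :=
  sInf {n : ℕ∞ | ∃ m : ℕ, n = m ∧ ThickN X m Y}

end Defs

section Biexact

variable {C : Type u₁} [Category.{v₁} C] [Preadditive C] [HasZeroObject C] [HasShift C ℤ]
  [∀ n : ℤ, (shiftFunctor C n).Additive] [Pretriangulated C] [HasBinaryBiproducts C]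
variable {D : Type u₂} [Category.{v₂} D] [Preadditive D] [HasZeroObject D] [HasShift D ℤ]
  [∀ n : ℤ, (shiftFunctor D n).Additive] [Pretriangulated D] [HasBinaryBiproducts D]
variable {E : Type u₃} [Category.{v₃} E] [Preadditive E] [HasZeroObject E] [HasShift E ℤ]
  [∀ n : ℤ, (shiftFunctor E n).Additive] [Pretriangulated E] [HasBinaryBiproducts E]

/-- A biexact functor of triangulated categories: a bifunctor together with natural
isomorphisms `θ : F(Σⁿ-,-) ≅ ΣⁿF(-,-)` and `ζ : F(-,Σⁿ-) ≅ ΣⁿF(-,-)` which are exact in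
each variable and anticommute. -/
structure Biexact (F : C ⥤ D ⥤ E) where
  θ : ∀ (n : ℤ) (X : C) (X' : D), (F.obj (X⟦n⟧)).obj X' ≅ ((F.obj X).obj X')⟦n⟧
  ζ : ∀ (n : ℤ) (X : C) (X' : D), (F.obj X).obj (X'⟦n⟧) ≅ ((F.obj X).obj X')⟦n⟧
  θ_natural₁ : ∀ (n : ℤ) {X Y : C} (f : X ⟶ Y) (X' : D),
    (F.map (f⟦n⟧')).app X' ≫ (θ n Y X').hom = (θ n X X').hom ≫ ((F.map f).app X')⟦n⟧'
  θ_natural₂ : ∀ (n : ℤ) (X : C) {X' Y' : D} (g : X' ⟶ Y'),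
    (F.obj (X⟦n⟧)).map g ≫ (θ n X Y').hom = (θ n X X').hom ≫ (((F.obj X).map g)⟦n⟧')
  ζ_natural₁ : ∀ (n : ℤ) {X Y : C} (f : X ⟶ Y) (X' : D),
    (F.map f).app (X'⟦n⟧) ≫ (ζ n Y X').hom = (ζ n X X').hom ≫ (((F.map f).app X')⟦n⟧')
  ζ_natural₂ : ∀ (n : ℤ) (X : C) {X' Y' : D} (g : X' ⟶ Y'),
    (F.obj X).map (g⟦n⟧') ≫ (ζ n X Y').hom = (ζ n X X').hom ≫ (((F.obj X).map g)⟦n⟧')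
  ex₁ : ∀ (T : Triangle C), (T ∈ distTriang C) → ∀ (X' : D),
    Triangle.mk ((F.map T.mor₁).app X') ((F.map T.mor₂).app X')
      ((F.map T.mor₃).app X' ≫ (θ 1 T.obj₁ X').hom) ∈ distTriang E
  ex₂ : ∀ (X : C) (T : Triangle D), (T ∈ distTriang D) →
    Triangle.mk ((F.obj X).map T.mor₁) ((F.obj X).map T.mor₂)
      ((F.obj X).map T.mor₃ ≫ (ζ 1 X T.obj₁).hom) ∈ distTriang E
  anticomm : ∀ (X : C) (X' : D),
    (θ 1 X (X'⟦(1 : ℤ)⟧)).hom ≫ (((ζ 1 X X').hom)⟦(1 : ℤ)⟧') =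
      -((ζ 1 (X⟦(1 : ℤ)⟧) X').hom ≫ (((θ 1 X X').hom)⟦(1 : ℤ)⟧'))

/-- A biexact functor admits a strong Verdier structure: for every pair of exact triangles
there is an object `W` together with three exact triangles as in
Keller–Neeman/Aldrovandi–Lester, such that the resulting `4 × 4` diagram commutes and the
six designated squares are homotopy cartesian (the last one after changing a sign). -/
def StrongVerdier (F : C ⥤ D ⥤ E) (B : Biexact F) : Prop :=
  ∀ {X Y Z : C} {f : X ⟶ Y} {g : Y ⟶ Z} {h : Z ⟶ X⟦(1 : ℤ)⟧},
    (Triangle.mk f g h ∈ distTriang C) →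
  ∀ {X' Y' Z' : D} {f' : X' ⟶ Y'} {g' : Y' ⟶ Z'} {h' : Z' ⟶ X'⟦(1 : ℤ)⟧},
    (Triangle.mk f' g' h' ∈ distTriang D) →
  ∃ (W : E) (j : (F.obj X).obj Y' ⟶ W) (q : W ⟶ (F.obj Z).obj X')
    (i : W ⟶ (F.obj Y).obj Y') (p : (F.obj Z).obj Z' ⟶ W⟦(1 : ℤ)⟧)
    (j' : (F.obj Y).obj X' ⟶ W) (q' : W ⟶ (F.obj X).obj Z'),
    -- the three exact triangles
    (Triangle.mk j q ((F.map h).app X' ≫ (F.obj (X⟦(1 : ℤ)⟧)).map f' ≫ (B.θ 1 X Y').hom)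
        ∈ distTriang E) ∧
    (Triangle.mk i ((F.map g).app Y' ≫ (F.obj Z).map g') p ∈ distTriang E) ∧
    (Triangle.mk j' q' ((F.map f).app Z' ≫ (F.obj Y).map h' ≫ (B.ζ 1 Y X').hom)
        ∈ distTriang E) ∧
    -- the triangles (i)–(vi) commute
    j ≫ i = (F.map f).app Y' ∧
    j' ≫ i = (F.obj Y).map f' ∧
    j' ≫ q = (F.map g).app X' ∧
    j ≫ q' = (F.obj X).map g' ∧
    p ≫ (q'⟦(1 : ℤ)⟧') = (F.map h).app Z' ≫ (B.θ 1 X Z').hom ∧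
    p ≫ (q⟦(1 : ℤ)⟧') = (F.obj Z).map h' ≫ (B.ζ 1 Z X').hom ∧
    -- the squares (I)–(VI) are homotopy cartesian
    HomotopyCartesian ((F.map f).app X') ((F.obj X).map f') j' j ∧
    HomotopyCartesian i q ((F.map g).app Y') ((F.obj Z).map f') ∧
    HomotopyCartesian i q' ((F.obj Y).map g') ((F.map f).app Z') ∧
    HomotopyCartesian ((F.map h).app Y' ≫ (B.θ 1 X Y').hom) ((F.obj Z).map g')
      (j⟦(1 : ℤ)⟧') p ∧
    HomotopyCartesian ((F.map g).app Z') ((F.obj Y).map h' ≫ (B.ζ 1 Y X').hom) p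
      (j'⟦(1 : ℤ)⟧') ∧
    HomotopyCartesian q q' ((F.map h).app X' ≫ (B.θ 1 X X').hom)
      (-((F.obj X).map h' ≫ (B.ζ 1 X X').hom))

end Biexact

section Central

variable (C : Type u₁) [Category.{v₁} C] [Preadditive C] [HasZeroObject C] [HasShift C ℤ]
  [∀ n : ℤ, (shiftFunctor C n).Additive] [Pretriangulated C] [HasBinaryBiproducts C]

/-- An element of degree `d` of the graded center of the triangulated category `C`:
a natural transformation `id ⟶ Σᵈ` with `α Σ = (-1)^d Σ α`. -/
structure Central where
  d : ℤ
  app : ∀ X : C, X ⟶ X⟦d⟧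
  naturality : ∀ {X Y : C} (f : X ⟶ Y), app X ≫ (f⟦d⟧') = f ≫ app Y
  central : ∀ X : C,
    app (X⟦(1 : ℤ)⟧) ≫ (shiftComm X (1 : ℤ) d).hom = d.negOnePow • ((app X)⟦(1 : ℤ)⟧')

variable {C}

/-- `K` is a cone of `f`. -/
def IsCone {X Y : C} (f : X ⟶ Y) (K : C) : Prop :=
  ∃ (a : Y ⟶ K) (b : K ⟶ X⟦(1 : ℤ)⟧), Triangle.mk f a b ∈ distTriang C

/-- `K` is a Koszul object of the sequence `αs` of central elements on `X`. -/
def IsKoszulObj : List (Central C) → C → C → Prop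
  | [], X, K => Nonempty (X ≅ K)
  | α :: rest, X, K => ∃ K' : C, IsCone (α.app X) K' ∧ IsKoszulObj rest K' K

variable {S : Type u₂} [Category.{v₂} S] [Preadditive S] [HasZeroObject S] [HasShift S ℤ]
  [∀ n : ℤ, (shiftFunctor S n).Additive] [Pretriangulated S] [HasBinaryBiproducts S]
  [MonoidalCategory S]

/-- An action of a monoidal triangulated category `(S, ⊗, 𝟙)` on `C`: a biexact functor
together with associativity and unit isomorphisms, natural in each variable. -/
structure MonoidalAction (F : S ⥤ C ⥤ C) extends Biexact F where
  assoc : ∀ (A B : S) (X : C), (F.obj A).obj ((F.obj B).obj X) ≅ (F.obj (A ⊗ B)).obj X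
  unit : ∀ X : C, (F.obj (𝟙_ S)).obj X ≅ X
  unit_naturality : ∀ {X Y : C} (f : X ⟶ Y),
    (F.obj (𝟙_ S)).map f ≫ (unit Y).hom = (unit X).hom ≫ f
  assoc_naturality : ∀ (A B : S) {X Y : C} (f : X ⟶ Y),
    (F.obj A).map ((F.obj B).map f) ≫ (assoc A B Y).hom =
      (assoc A B X).hom ≫ (F.obj (A ⊗ B)).map f

/-- The central element `α` is induced by the action `M`, i.e. `α = α_f` for some graded
endomorphism `f` of the unit `𝟙`. -/
def MonoidalAction.Induces {F : S ⥤ C ⥤ C} (M : MonoidalAction F) (α : Central C) : Prop :=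
  ∃ f : (𝟙_ S) ⟶ (𝟙_ S)⟦α.d⟧, ∀ X : C,
    α.app X = (M.unit X).inv ≫ (F.map f).app X ≫ (M.θ α.d (𝟙_ S) X).hom ≫
      ((M.unit X).hom⟦α.d⟧')

end Central

/-!
If `α = α_f` is induced by an action `F`, then a cone of `α(Z)` is `F(cone f, Z)`, so taking
the Koszul object for `α` is, up to isomorphism, the functor `F(cone f, -)`, which is exact.
Composing these functors along the sequence gives a single exact functor `G` with
`X//α ≅ G X` and `Y//α ≅ G Y`. An exact functor sends each stage of the filtration
`thick¹(X) ⊆ thick²(X) ⊆ ⋯` into the corresponding stage for `G X`, so it cannot increase levels.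
-/

section Thick

variable {C : Type u₁} [Category.{v₁} C] [Preadditive C] [HasShift C ℤ] [HasBinaryBiproducts C]

lemma Thick1.of_iso_left {X X' Y : C} (e : X ≅ X') (h : Thick1 X Y) : Thick1 X' Y := by
  induction h with
  | base => exact .retract _ _ e.hom e.inv e.hom_inv_id .base
  | zero Z hZ => exact .zero _ hZ
  | shift n Y _ ih => exact .shift n _ ih
  | sum Y Z _ _ ihY ihZ => exact .sum _ _ ihY ihZ
  | retract Y Z i r hir _ ih => exact .retract _ _ i r hir ih

lemma Thick1.of_iso_right {X Y Y' : C} (h : Thick1 X Y) (e : Y ≅ Y') : Thick1 X Y' :=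
  .retract _ _ e.inv e.hom e.inv_hom_id h

end Thick

section Exact

open ZeroObject

variable {C : Type u₁} [Category.{v₁} C] [Preadditive C] [HasZeroObject C] [HasShift C ℤ]
  [∀ n : ℤ, (shiftFunctor C n).Additive] [Pretriangulated C]
variable {D : Type u₂} [Category.{v₂} D] [Preadditive D] [HasZeroObject D] [HasShift D ℤ]
  [∀ n : ℤ, (shiftFunctor D n).Additive] [Pretriangulated D]

/-- The shift isomorphisms need not be natural and the connecting morphism is arbitrary:
this is all that the level estimate uses. -/
structure IsWeaklyExact (G : C ⥤ D) : Prop where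
  shift_iso : ∀ (n : ℤ) (X : C), Nonempty (G.obj (X⟦n⟧) ≅ (G.obj X)⟦n⟧)
  map_distinguished : ∀ T ∈ distTriang C, ∃ δ : G.obj T.obj₃ ⟶ (G.obj T.obj₁)⟦(1 : ℤ)⟧,
    Triangle.mk (G.map T.mor₁) (G.map T.mor₂) δ ∈ distTriang D

lemma isWeaklyExact_id : IsWeaklyExact (𝟭 C) :=
  ⟨fun _ _ => ⟨Iso.refl _⟩, fun T hT => ⟨T.mor₃, hT⟩⟩

lemma IsWeaklyExact.comp {E : Type u₃} [Category.{v₃} E] [Preadditive E] [HasZeroObject E]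
    [HasShift E ℤ] [∀ n : ℤ, (shiftFunctor E n).Additive] [Pretriangulated E]
    {G : C ⥤ D} {H : D ⥤ E} (hG : IsWeaklyExact G) (hH : IsWeaklyExact H) :
    IsWeaklyExact (G ⋙ H) where
  shift_iso n X := by
    obtain ⟨e₁⟩ := hG.shift_iso n X
    obtain ⟨e₂⟩ := hH.shift_iso n (G.obj X)
    exact ⟨H.mapIso e₁ ≪≫ e₂⟩
  map_distinguished T hT := by
    obtain ⟨δ, hδ⟩ := hG.map_distinguished T hT
    exact hH.map_distinguished _ hδ

lemma IsWeaklyExact.isZero_obj {G : C ⥤ D} (hG : IsWeaklyExact G) {Z : C} (hZ : IsZero Z) :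
    IsZero (G.obj Z) := by
  obtain ⟨δ, hδ⟩ := hG.map_distinguished _ (contractible_distinguished Z)
  have hzero : IsZero (G.obj (0 : C)) := by
    refine Triangle.isZero₃_of_isIso₁ _ hδ ?_
    change IsIso (G.map (𝟙 Z))
    rw [G.map_id]
    infer_instance
  exact hzero.of_iso (G.mapIso (hZ.iso (isZero_zero C)))

lemma Biexact.isWeaklyExact_obj {E : Type u₃} [Category.{v₃} E] [Preadditive E]
    [HasZeroObject E] [HasShift E ℤ] [∀ n : ℤ, (shiftFunctor E n).Additive] [Pretriangulated E]
    {F : C ⥤ D ⥤ E} (B : Biexact F) (A : C) :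
    IsWeaklyExact (F.obj A) :=
  ⟨fun n X => ⟨B.ζ n A X⟩, fun T hT => ⟨_, B.ex₂ A T hT⟩⟩

lemma mk_distinguished_of_iso₂ {A B B' E : C} {a : A ⟶ B} {b : B ⟶ E} {c : E ⟶ A⟦(1 : ℤ)⟧}
    (hT : Triangle.mk a b c ∈ distTriang C) (e : B ≅ B') :
    Triangle.mk (a ≫ e.hom) (e.inv ≫ b) c ∈ distTriang C :=
  isomorphic_distinguished _ hT _ <|
    Triangle.isoMk _ _ (Iso.refl _) e.symm (Iso.refl _) (by simp [Triangle.mk])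
      (by simp [Triangle.mk]) (by simp [Triangle.mk])

end Exact

section Level

variable {C : Type u₁} [Category.{v₁} C] [Preadditive C] [HasZeroObject C] [HasShift C ℤ]
  [∀ n : ℤ, (shiftFunctor C n).Additive] [Pretriangulated C] [HasBinaryBiproducts C]
variable {D : Type u₂} [Category.{v₂} D] [Preadditive D] [HasZeroObject D] [HasShift D ℤ]
  [∀ n : ℤ, (shiftFunctor D n).Additive] [Pretriangulated D] [HasBinaryBiproducts D]

lemma IsWeaklyExact.map_biprod {G : C ⥤ D} (hG : IsWeaklyExact G) (Y Z : C) :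
    Nonempty (G.obj (Y ⊞ Z) ≅ G.obj Y ⊞ G.obj Z) := by
  obtain ⟨δ, hδ⟩ := hG.map_distinguished _ (binaryBiproductTriangle_distinguished Y Z)
  -- `G.map biprod.snd` is split epi, so the connecting morphism vanishes.
  have hδ_zero : δ = 0 := by
    have hsplit : G.map biprod.inr ≫ G.map (biprod.snd : Y ⊞ Z ⟶ Z) = 𝟙 _ := by
      rw [← G.map_comp, biprod.inr_snd, G.map_id]
    erw [← id_comp δ, ← hsplit, assoc, comp_distTriang_mor_zero₂₃ _ hδ, comp_zero]
  subst hδ_zero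
  obtain ⟨e, -, -⟩ := exists_iso_binaryBiproduct_of_distTriang _ hδ rfl
  exact ⟨e⟩

lemma Thick1.map {G : C ⥤ D} (hG : IsWeaklyExact G) {X Y : C} (h : Thick1 X Y) :
    Thick1 (G.obj X) (G.obj Y) := by
  induction h with
  | base => exact .base
  | zero Z hZ => exact .zero _ (hG.isZero_obj hZ)
  | shift n Y _ ih =>
    obtain ⟨e⟩ := hG.shift_iso n Y
    exact .retract _ _ e.hom e.inv e.hom_inv_id (.shift n _ ih)
  | sum Y Z _ _ ihY ihZ =>
    obtain ⟨e⟩ := hG.map_biprod Y Z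
    exact .retract _ _ e.hom e.inv e.hom_inv_id (.sum _ _ ihY ihZ)
  | retract Y Z i r hir _ ih =>
    exact .retract _ _ (G.map i) (G.map r) (by rw [← G.map_comp, hir, G.map_id]) ih

lemma ThickN.map {G : C ⥤ D} (hG : IsWeaklyExact G) {X : C} :
    ∀ (n : ℕ) {Y : C}, ThickN X n Y → ThickN (G.obj X) n (G.obj Y)
  | 0, _, h => hG.isZero_obj h
  | 1, _, h => Thick1.map hG h
  | n + 2, Y, ⟨_, Ytil, _, _, _, _, hT, h₁, h₂⟩ => by
    obtain ⟨δ, hδ⟩ := hG.map_distinguished _ hT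
    obtain ⟨e⟩ := hG.map_biprod Y Ytil
    exact ⟨_, _, _, _, _, _, mk_distinguished_of_iso₂ hδ e, h₁.map hG,
      ThickN.map hG (n + 1) h₂⟩

lemma ThickN.of_iso_left {X X' : C} (e : X ≅ X') :
    ∀ (n : ℕ) {Y : C}, ThickN X n Y → ThickN X' n Y
  | 0, _, h => h
  | 1, _, h => Thick1.of_iso_left e h
  | n + 2, _, ⟨Y', Ytil, Y'', a, b, c, hT, h₁, h₂⟩ =>
    ⟨Y', Ytil, Y'', a, b, c, hT, h₁.of_iso_left e, ThickN.of_iso_left e (n + 1) h₂⟩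

lemma ThickN.of_iso_right {X : C} :
    ∀ (n : ℕ) {Y Y' : C}, ThickN X n Y → (Y ≅ Y') → ThickN X n Y'
  | 0, _, _, h, e => h.of_iso e.symm
  | 1, _, _, h, e => Thick1.of_iso_right h e
  | _ + 2, _, _, ⟨Y', Ytil, Y'', _, _, _, hT, h₁, h₂⟩, e =>
    ⟨Y', Ytil, Y'', _, _, _, mk_distinguished_of_iso₂ hT (biprod.mapIso e (Iso.refl Ytil)),
      h₁, h₂⟩

lemma level_le_of_forall_thickN {X Y : C} {X' Y' : D} (h : ∀ n, ThickN X n Y → ThickN X' n Y') :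
    level X' Y' ≤ level X Y :=
  sInf_le_sInf fun _ ⟨m, hm, hY⟩ => ⟨m, hm, h m hY⟩

lemma level_congr {X X' Y Y' : C} (eX : X ≅ X') (eY : Y ≅ Y') : level X Y = level X' Y' :=
  le_antisymm
    (level_le_of_forall_thickN fun n h => (h.of_iso_left eX.symm n).of_iso_right n eY.symm)
    (level_le_of_forall_thickN fun n h => (h.of_iso_left eX n).of_iso_right n eY)

lemma IsWeaklyExact.level_map_le {G : C ⥤ D} (hG : IsWeaklyExact G) (X Y : C) :
    level (G.obj X) (G.obj Y) ≤ level X Y :=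
  level_le_of_forall_thickN fun n => ThickN.map hG n

end Level

section Koszul

variable {C : Type u₁} [Category.{v₁} C] [Preadditive C] [HasZeroObject C] [HasShift C ℤ]
  [∀ n : ℤ, (shiftFunctor C n).Additive] [Pretriangulated C]

def IsKoszulFunctor (l : List (Central C)) (G : C ⥤ C) : Prop :=
  ∀ Z K : C, IsKoszulObj l Z K → Nonempty (K ≅ G.obj Z)

lemma isKoszulFunctor_nil : IsKoszulFunctor [] (𝟭 C) :=
  fun _ _ ⟨e⟩ => ⟨e.symm⟩

lemma IsKoszulFunctor.cons {β : Central C} {l : List (Central C)} {G H : C ⥤ C}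
    (hG : IsKoszulFunctor [β] G) (hH : IsKoszulFunctor l H) :
    IsKoszulFunctor (β :: l) (G ⋙ H) := by
  rintro Z K ⟨K', hK', hK⟩
  obtain ⟨e⟩ := hG Z K' ⟨K', hK', ⟨Iso.refl K'⟩⟩
  obtain ⟨e'⟩ := hH K' K hK
  exact ⟨e' ≪≫ H.mapIso e⟩

lemma exists_isKoszulFunctor (l : List (Central C))
    (hl : ∀ β ∈ l, ∃ G : C ⥤ C, IsWeaklyExact G ∧ IsKoszulFunctor [β] G) :
    ∃ G : C ⥤ C, IsWeaklyExact G ∧ IsKoszulFunctor l G := by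
  induction l with
  | nil => exact ⟨𝟭 C, isWeaklyExact_id, isKoszulFunctor_nil⟩
  | cons β l ih =>
    obtain ⟨G, hG, hβ⟩ := hl β List.mem_cons_self
    obtain ⟨H, hH, hl'⟩ := ih fun γ hγ => hl γ (List.mem_cons_of_mem _ hγ)
    exact ⟨G ⋙ H, hG.comp hH, hβ.cons hl'⟩

/-- For `α = α_f`, the functor is `F(cone f, -)`: applying `F(-, Z)` to the triangle of `f`
gives a triangle whose first morphism is identified with `α(Z)` by the unit isomorphism. -/
lemma MonoidalAction.Induces.exists_isKoszulFunctor [HasBinaryBiproducts C]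
    {S : Type u₂} [Category.{v₂} S] [Preadditive S] [HasZeroObject S] [HasShift S ℤ]
    [∀ n : ℤ, (shiftFunctor S n).Additive]
    [Pretriangulated S] [HasBinaryBiproducts S] [MonoidalCategory S] {F : S ⥤ C ⥤ C}
    {M : MonoidalAction F} {α : Central C} (h : M.Induces α) :
    ∃ G : C ⥤ C, IsWeaklyExact G ∧ IsKoszulFunctor [α] G := by
  obtain ⟨f, hf⟩ := h
  obtain ⟨Cf, _, _, hT⟩ := distinguished_cocone_triangle f
  refine ⟨F.obj Cf, M.isWeaklyExact_obj Cf, ?_⟩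
  rintro Z K ⟨K', ⟨_, _, hK'⟩, ⟨e⟩⟩
  have hcomm : (F.map f).app Z ≫
      (M.θ α.d (𝟙_ S) Z ≪≫ (shiftFunctor C α.d).mapIso (M.unit Z)).hom =
        (M.unit Z).hom ≫ α.app Z := by
    rw [hf Z, Iso.hom_inv_id_assoc]
    rfl
  exact ⟨e.symm ≪≫ (Triangle.π₃.mapIso
    (isoTriangleOfIso₁₂ _ _ (M.ex₁ _ hT Z) hK' (M.unit Z) _ hcomm)).symm⟩

end Koszul

/-- If each `αᵢ` in a sequence of central elements of `𝒯` is induced by an action of a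
monoidal triangulated category, then `level^{X ∥ α}(Y ∥ α) ≤ level^X(Y)`. -/
theorem level_koszul_le_level
    {C : Type u₁} [Category.{v₁} C] [Preadditive C] [HasZeroObject C] [HasShift C ℤ]
    [∀ n : ℤ, (shiftFunctor C n).Additive] [Pretriangulated C] [HasBinaryBiproducts C]
    {c : ℕ} (S : Fin c → Type u₂) [∀ i, Category.{v₂} (S i)] [∀ i, Preadditive (S i)]
    [∀ i, HasZeroObject (S i)] [∀ i, HasShift (S i) ℤ]
    [∀ i, ∀ n : ℤ, (shiftFunctor (S i) n).Additive] [∀ i, Pretriangulated (S i)]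
    [∀ i, HasBinaryBiproducts (S i)] [∀ i, MonoidalCategory (S i)]
    (F : ∀ i, S i ⥤ C ⥤ C) (M : ∀ i, MonoidalAction (F i))
    (α : Fin c → Central C) (hind : ∀ i, (M i).Induces (α i))
    (X Y KX KY : C)
    (hKX : IsKoszulObj (List.ofFn α) X KX) (hKY : IsKoszulObj (List.ofFn α) Y KY) :
    level KX KY ≤ level X Y := by
  obtain ⟨G, hG, hKoszul⟩ := exists_isKoszulFunctor (List.ofFn α) fun β hβ => by
    obtain ⟨i, rfl⟩ := List.mem_ofFn.1 hβ
    exact (hind i).exists_isKoszulFunctor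
  obtain ⟨eX⟩ := hKoszul X KX hKX
  obtain ⟨eY⟩ := hKoszul Y KY hKY
  rw [level_congr eX eY]
  exact hG.level_map_le X Y
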